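/- Let A_1 and A_2 be self-adjoint operators in a Hilbert space H whose resolvent difference at some (hence every) common resolvent point has finite rank n: (A_2 − z)^{-1} − (A_1 − z)^{-1} = ∑_{j,j'=1}^n P(z)_{j,j'} ⟨u_{j'}(z̄), ·⟩ u_j(z) with u_j(z) = (A_1 − i)(A_1 − z)^{-1} u_j(i). Then for z, z_0 in ρ(A_1) ∩ ρ(A_2) with P(z), P(z_0) invertible, the first resolvent identity for A_2 forces P(z)^{-1} − P(z_0)^{-1} = −(z − z_0) (⟨u_j(z̄), u_{j'}(z_0)⟩)_{1≤j,j'≤n}. -/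

import Mathlib

open Complex

open scoped ComplexConjugate

section helpers
variable {H : Type*} [NormedAddCommGroup H] [InnerProductSpace ℂ H] [CompleteSpace H]

lemma commute_ringInverse' {M : Type*} [Ring M] {b c : M} (hb : IsUnit b) (h : Commute c b) :
    Commute c (Ring.inverse b) := by
  have h1 : b * Ring.inverse b = 1 := Ring.mul_inverse_cancel b hb
  have h2 : Ring.inverse b * b = 1 := Ring.inverse_mul_cancel b hb
  have hbc : b * c = c * b := h.symm.eq
  show c * Ring.inverse b = Ring.inverse b * c
  calc c * Ring.inverse b = (Ring.inverse b * b) * c * Ring.inverse b := by rw [h2, one_mul]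
    _ = Ring.inverse b * (b * c) * Ring.inverse b := by noncomm_ring
    _ = Ring.inverse b * (c * b) * Ring.inverse b := by rw [hbc]
    _ = Ring.inverse b * c * (b * Ring.inverse b) := by noncomm_ring
    _ = Ring.inverse b * c := by rw [h1, mul_one]

lemma isUnit_sub_smul_one' (A : H →L[ℂ] H) (hA : IsSelfAdjoint A)
    {w : ℂ} (hw : w.im ≠ 0) : IsUnit (A - w • (1 : H →L[ℂ] H)) := by
  have hns : w ∉ spectrum ℂ A := fun hmem => hw (hA.im_eq_zero_of_mem_spectrum hmem)
  rw [spectrum.notMem_iff] at hns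
  rw [Algebra.algebraMap_eq_smul_one] at hns
  have := hns.neg
  simpa [neg_sub] using this

lemma adjoint_ringInverse' (A : H →L[ℂ] H) (hA : IsSelfAdjoint A) (w : ℂ) :
    ContinuousLinearMap.adjoint (Ring.inverse (A - w • (1 : H →L[ℂ] H)))
      = Ring.inverse (A - (conj w) • (1 : H →L[ℂ] H)) := by
  rw [← ContinuousLinearMap.star_eq_adjoint, ← Ring.inverse_star]
  congr 1
  rw [star_sub, star_smul, star_one, hA.star_eq]
  rfl

omit [CompleteSpace H] in
lemma matrix_zero_of_sums' {n : ℕ} (v w : Fin n → H) (hv : LinearIndependent ℂ v)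
    (hw : LinearIndependent ℂ w) (M : Matrix (Fin n) (Fin n) ℂ)
    (h : ∀ x : H, ∑ j, (∑ j', M j j' * @inner ℂ H _ (w j') x) • v j = 0) : M = 0 := by
  have hv' := Fintype.linearIndependent_iff.mp hv
  have hw' := Fintype.linearIndependent_iff.mp hw
  have key : ∀ j, ∀ x : H, ∑ j', M j j' * @inner ℂ H _ (w j') x = 0 := fun j x => hv' _ (h x) j
  ext j j'
  have h2 : ∀ x : H, @inner ℂ H _ (∑ j', (starRingEnd ℂ) (M j j') • w j') x = 0 := by
    intro x
    rw [sum_inner]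
    simpa [inner_smul_left] using key j x
  have h3 : (∑ j', (starRingEnd ℂ) (M j j') • w j') = 0 := by
    have := h2 (∑ j', (starRingEnd ℂ) (M j j') • w j')
    rwa [inner_self_eq_zero] at this
  have := hw' _ h3 j'
  simpa using congrArg (starRingEnd ℂ) this

lemma res_identity' (A : H →L[ℂ] H) {z z₀ : ℂ}
    (hz : IsUnit (A - z • (1 : H →L[ℂ] H))) (hz₀ : IsUnit (A - z₀ • (1 : H →L[ℂ] H))) :
    Ring.inverse (A - z • (1 : H →L[ℂ] H)) - Ring.inverse (A - z₀ • (1 : H →L[ℂ] H))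
      = (z - z₀) • (Ring.inverse (A - z • (1 : H →L[ℂ] H))
          * Ring.inverse (A - z₀ • (1 : H →L[ℂ] H))) := by
  set Rz := Ring.inverse (A - z • (1 : H →L[ℂ] H))
  set Rz₀ := Ring.inverse (A - z₀ • (1 : H →L[ℂ] H))
  have h2 : Rz * (A - z • (1 : H →L[ℂ] H)) = 1 := Ring.inverse_mul_cancel _ hz
  have h3 : (A - z₀ • (1 : H →L[ℂ] H)) * Rz₀ = 1 := Ring.mul_inverse_cancel _ hz₀
  have key : (A - z₀ • (1 : H →L[ℂ] H)) - (A - z • (1 : H →L[ℂ] H))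
      = (z - z₀) • (1 : H →L[ℂ] H) := by
    rw [sub_sub_sub_cancel_left, ← sub_smul]
  calc Rz - Rz₀ = Rz * ((A - z₀ • (1 : H →L[ℂ] H)) * Rz₀)
        - (Rz * (A - z • (1 : H →L[ℂ] H))) * Rz₀ := by rw [h3, h2, mul_one, one_mul]
    _ = Rz * (((A - z₀ • (1 : H →L[ℂ] H)) - (A - z • (1 : H →L[ℂ] H))) * Rz₀) := by
        rw [mul_assoc, ← mul_sub, ← sub_mul]
    _ = (z - z₀) • (Rz * Rz₀) := by rw [key, smul_mul_assoc, one_mul, mul_smul_comm]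

lemma big_identity' {W : Type*} [AddCommGroup W] [Module ℂ W] {n : ℕ}
    (Pz Pz₀ G : Matrix (Fin n) (Fin n) ℂ) (a b : Fin n → W) (α β : Fin n → ℂ)
    {z z₀ : ℂ} (hzz : z - z₀ ≠ 0)
    (hE : (∑ j, ∑ j', Pz j j' • (α j' • a j)) - (∑ j, ∑ j', Pz₀ j j' • (β j' • b j))
      = (z - z₀) • (∑ j, ∑ j', Pz₀ j j' • (β j' •
            ((z - z₀)⁻¹ • (a j - b j) + ∑ k, ∑ k', Pz k k' • (G k' j • a k))))
        + (z - z₀) • (∑ j, ∑ j', Pz j j' • (((z₀ - z)⁻¹ * (β j' - α j')) • a j))) :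
    ∑ k, (∑ j', (Pz k j' - Pz₀ k j' - (z - z₀) * (Pz * G * Pz₀) k j') * β j') • a k = 0 := by
  have hz₀z : z₀ - z ≠ 0 := by intro h; apply hzz; linear_combination -h
  have hA : (∑ j, ∑ j', Pz j j' • (α j' • a j)) = ∑ j, (∑ j', Pz j j' * α j') • a j := by
    refine Finset.sum_congr rfl fun j _ => ?_
    rw [Finset.sum_smul]
    exact Finset.sum_congr rfl fun j' _ => (smul_smul _ _ _)
  have hB : (∑ j, ∑ j', Pz₀ j j' • (β j' • b j)) = ∑ j, (∑ j', Pz₀ j j' * β j') • b j := by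
    refine Finset.sum_congr rfl fun j _ => ?_
    rw [Finset.sum_smul]
    exact Finset.sum_congr rfl fun j' _ => (smul_smul _ _ _)
  have hC : (z - z₀) • (∑ j, ∑ j', Pz j j' • (((z₀ - z)⁻¹ * (β j' - α j')) • a j))
      = ∑ j, (∑ j', Pz j j' * (α j' - β j')) • a j := by
    rw [Finset.smul_sum]
    refine Finset.sum_congr rfl fun j _ => ?_
    rw [Finset.smul_sum, Finset.sum_smul]
    refine Finset.sum_congr rfl fun j' _ => ?_
    rw [smul_smul, smul_smul]
    congr 1
    field_simp
    ring
  have hF : (z - z₀) • (∑ j, ∑ j', Pz₀ j j' • (β j' •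
        ((z - z₀)⁻¹ • (a j - b j) + ∑ k, ∑ k', Pz k k' • (G k' j • a k))))
      = (∑ j, (∑ j', Pz₀ j j' * β j') • a j - ∑ j, (∑ j', Pz₀ j j' * β j') • b j)
        + ∑ k, (∑ j', (z - z₀) * (Pz * G * Pz₀) k j' * β j') • a k := by
    have hT : ∀ j, (∑ k, ∑ k', Pz k k' • (G k' j • a k))
        = ∑ k, (∑ k', Pz k k' * G k' j) • a k := by
      intro j
      refine Finset.sum_congr rfl fun k _ => ?_
      rw [Finset.sum_smul]
      exact Finset.sum_congr rfl fun k' _ => (smul_smul _ _ _)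
    have leaf : ∀ j j', (z - z₀) • (Pz₀ j j' • (β j' •
          ((z - z₀)⁻¹ • (a j - b j) + ∑ k, ∑ k', Pz k k' • (G k' j • a k))))
        = (Pz₀ j j' * β j') • (a j - b j)
          + ∑ k, ((z - z₀) * Pz₀ j j' * β j' * (∑ k', Pz k k' * G k' j)) • a k := by
      intro j j'
      rw [hT j, smul_add, smul_add, smul_add, Finset.smul_sum, Finset.smul_sum, Finset.smul_sum]
      congr 1
      · rw [smul_smul, smul_smul, smul_smul]
        congr 1
        field_simp
        try ring
      · refine Finset.sum_congr rfl fun k _ => ?_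
        module
    calc (z - z₀) • (∑ j, ∑ j', Pz₀ j j' • (β j' •
          ((z - z₀)⁻¹ • (a j - b j) + ∑ k, ∑ k', Pz k k' • (G k' j • a k))))
        = ∑ j, ∑ j', ((Pz₀ j j' * β j') • (a j - b j)
            + ∑ k, ((z - z₀) * Pz₀ j j' * β j' * (∑ k', Pz k k' * G k' j)) • a k) := by
          rw [Finset.smul_sum]
          refine Finset.sum_congr rfl fun j _ => ?_
          rw [Finset.smul_sum]
          exact Finset.sum_congr rfl fun j' _ => leaf j j'
      _ = (∑ j, (∑ j', Pz₀ j j' * β j') • (a j - b j))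
            + ∑ j, ∑ j', ∑ k, ((z - z₀) * Pz₀ j j' * β j' * (∑ k', Pz k k' * G k' j)) • a k := by
          rw [← Finset.sum_add_distrib]
          refine Finset.sum_congr rfl fun j _ => ?_
          rw [Finset.sum_add_distrib, ← Finset.sum_smul]
      _ = (∑ j, (∑ j', Pz₀ j j' * β j') • a j - ∑ j, (∑ j', Pz₀ j j' * β j') • b j)
            + ∑ k, (∑ j', (z - z₀) * (Pz * G * Pz₀) k j' * β j') • a k := by
          congr 1
          · rw [← Finset.sum_sub_distrib]
            exact Finset.sum_congr rfl fun j _ => smul_sub _ _ _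
          · calc ∑ j, ∑ j', ∑ k, ((z - z₀) * Pz₀ j j' * β j' * (∑ k', Pz k k' * G k' j)) • a k
                = ∑ j, ∑ k, ∑ j', ((z - z₀) * Pz₀ j j' * β j' * (∑ k', Pz k k' * G k' j)) • a k :=
                  Finset.sum_congr rfl fun j _ => Finset.sum_comm
              _ = ∑ k, ∑ j, ∑ j', ((z - z₀) * Pz₀ j j' * β j' * (∑ k', Pz k k' * G k' j)) • a k :=
                  Finset.sum_comm
              _ = ∑ k, (∑ j', (z - z₀) * (Pz * G * Pz₀) k j' * β j') • a k := by
                  refine Finset.sum_congr rfl fun k _ => ?_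
                  calc ∑ j, ∑ j', ((z - z₀) * Pz₀ j j' * β j' * (∑ k', Pz k k' * G k' j)) • a k
                      = ∑ j, (∑ j', (z - z₀) * Pz₀ j j' * β j' * (∑ k', Pz k k' * G k' j)) • a k :=
                        Finset.sum_congr rfl fun j _ => (Finset.sum_smul).symm
                    _ = (∑ j, ∑ j', (z - z₀) * Pz₀ j j' * β j' * (∑ k', Pz k k' * G k' j)) • a k :=
                        (Finset.sum_smul).symm
                    _ = (∑ j', (z - z₀) * (Pz * G * Pz₀) k j' * β j') • a k := by
                        congr 1
                        rw [Finset.sum_comm]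
                        refine Finset.sum_congr rfl fun j' _ => ?_
                        simp only [Matrix.mul_apply, Finset.sum_mul, Finset.mul_sum]
                        refine Finset.sum_congr rfl fun x _ => Finset.sum_congr rfl fun y _ => ?_
                        ring
  have main : (∑ k, (∑ j', (Pz k j' - Pz₀ k j' - (z - z₀) * (Pz * G * Pz₀) k j') * β j') • a k)
      = ((∑ j, ∑ j', Pz j j' • (α j' • a j)) - (∑ j, ∑ j', Pz₀ j j' • (β j' • b j)))
        - ((z - z₀) • (∑ j, ∑ j', Pz₀ j j' • (β j' •
              ((z - z₀)⁻¹ • (a j - b j) + ∑ k, ∑ k', Pz k k' • (G k' j • a k))))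
          + (z - z₀) • (∑ j, ∑ j', Pz j j' • (((z₀ - z)⁻¹ * (β j' - α j')) • a j))) := by
    rw [hA, hB, hC, hF]
    have habel : ∀ (A B Pa Q C : W), A - B - ((Pa - B + Q) + C) = A - Pa - Q - C := by
      intro A B Pa Q C; abel
    rw [habel]
    rw [← Finset.sum_sub_distrib, ← Finset.sum_sub_distrib, ← Finset.sum_sub_distrib]
    refine Finset.sum_congr rfl fun k _ => ?_
    rw [← sub_smul, ← sub_smul, ← sub_smul]
    congr 1
    simp only [sub_mul, mul_sub, Finset.sum_sub_distrib]
    ring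
  rw [main, hE, sub_self]

end helpers

/-- The `z`-dependence relation for the Krein matrix: if the resolvent difference of two
self-adjoint operators `A₁, A₂` is the finite-rank operator
`∑_{j,j'} P(z)_{j,j'} ⟨u_{j'}(z̄), ·⟩ u_j(z)` with `u_j(z) = (A₁-i)(A₁-z)⁻¹ u_j`, then
for nonreal `z, z₀` with `P(z), P(z₀)` invertible,
`P(z)⁻¹ - P(z₀)⁻¹ = -(z - z₀)(⟨u_j(z̄), u_{j'}(z₀)⟩)_{j,j'}`. -/
theorem krein_matrix_z_dependence {H : Type*} [NormedAddCommGroup H]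
    [InnerProductSpace ℂ H] [CompleteSpace H]
    (A₁ A₂ : H →L[ℂ] H) (hA₁ : IsSelfAdjoint A₁) (hA₂ : IsSelfAdjoint A₂) {n : ℕ}
    (u : Fin n → H) (hu : LinearIndependent ℂ u)
    (Res₁ Res₂ : ℂ → (H →L[ℂ] H))
    (hRes₁ : ∀ z, Res₁ z = Ring.inverse (A₁ - z • (1 : H →L[ℂ] H)))
    (hRes₂ : ∀ z, Res₂ z = Ring.inverse (A₂ - z • (1 : H →L[ℂ] H)))
    (uz : ℂ → Fin n → H)
    (huz : ∀ z j, uz z j = (A₁ - I • (1 : H →L[ℂ] H)) (Res₁ z (u j)))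
    (P : ℂ → Matrix (Fin n) (Fin n) ℂ)
    (hKrein : ∀ z : ℂ, z.im ≠ 0 → Res₂ z - Res₁ z =
      ∑ j : Fin n, ∑ j' : Fin n,
        P z j j' • ((innerSL ℂ (uz (conj z) j')).smulRight (uz z j)))
    (z z₀ : ℂ) (hz : z.im ≠ 0) (hz₀ : z₀.im ≠ 0)
    (hPz : IsUnit (P z).det) (hPz₀ : IsUnit (P z₀).det) :
    (P z)⁻¹ - (P z₀)⁻¹ =
      Matrix.of (fun j j' =>
        -(z - z₀) * @inner ℂ H _ (uz (conj z) j) (uz z₀ j')) := by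
  rcases eq_or_ne z z₀ with rfl | hne
  · ext j j'
    simp
  have hzz : z - z₀ ≠ 0 := sub_ne_zero.mpr hne
  have hcz : (conj z).im ≠ 0 := by simpa using hz
  have hcz₀ : (conj z₀).im ≠ 0 := by simpa using hz₀
  have hcne : conj z₀ ≠ conj z := by
    intro h
    apply hne
    have h2 := congrArg conj h
    simpa using h2.symm
  -- units
  have hU1 : ∀ w : ℂ, w.im ≠ 0 → IsUnit (A₁ - w • (1 : H →L[ℂ] H)) :=
    fun w hw => isUnit_sub_smul_one' A₁ hA₁ hw
  have hU2 : ∀ w : ℂ, w.im ≠ 0 → IsUnit (A₂ - w • (1 : H →L[ℂ] H)) :=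
    fun w hw => isUnit_sub_smul_one' A₂ hA₂ hw
  have hUi : IsUnit (A₁ - I • (1 : H →L[ℂ] H)) := isUnit_sub_smul_one' A₁ hA₁ (by simp)
  -- commutation of A₁ - i with the resolvent
  have hcomm : ∀ w : ℂ, w.im ≠ 0 →
      (A₁ - I • (1 : H →L[ℂ] H)) * Res₁ w = Res₁ w * (A₁ - I • (1 : H →L[ℂ] H)) := by
    intro w hw
    have hCw : Commute (A₁ - I • (1 : H →L[ℂ] H)) (A₁ - w • (1 : H →L[ℂ] H)) := by
      apply Commute.sub_left
      · exact Commute.sub_right (Commute.refl A₁) ((Commute.one_right A₁).smul_right w)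
      · exact Commute.sub_right ((Commute.one_left A₁).smul_left I)
          (((Commute.refl (1 : H →L[ℂ] H)).smul_left I).smul_right w)
    rw [hRes₁]
    exact (commute_ringInverse' (hU1 w hw) hCw).eq
  -- resolvent identities
  have hres : ∀ w w₀ : ℂ, w.im ≠ 0 → w₀.im ≠ 0 →
      Res₁ w - Res₁ w₀ = (w - w₀) • (Res₁ w * Res₁ w₀) := by
    intro w w₀ hw hw₀
    rw [hRes₁, hRes₁]
    exact res_identity' A₁ (hU1 w hw) (hU1 w₀ hw₀)
  have hres2 : ∀ w w₀ : ℂ, w.im ≠ 0 → w₀.im ≠ 0 →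
      Res₂ w - Res₂ w₀ = (w - w₀) • (Res₂ w * Res₂ w₀) := by
    intro w w₀ hw hw₀
    rw [hRes₂, hRes₂]
    exact res_identity' A₂ (hU2 w hw) (hU2 w₀ hw₀)
  -- the key vector identity
  have hvec : ∀ w w₀ : ℂ, w.im ≠ 0 → w₀.im ≠ 0 → ∀ j,
      uz w j = uz w₀ j + (w - w₀) • Res₁ w (uz w₀ j) := by
    intro w w₀ hw hw₀ j
    have hswap : Res₁ w (uz w₀ j)
        = (A₁ - I • (1 : H →L[ℂ] H)) (Res₁ w (Res₁ w₀ (u j))) := by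
      rw [huz]
      calc Res₁ w ((A₁ - I • (1 : H →L[ℂ] H)) (Res₁ w₀ (u j)))
          = (Res₁ w * (A₁ - I • (1 : H →L[ℂ] H))) (Res₁ w₀ (u j)) := rfl
        _ = ((A₁ - I • (1 : H →L[ℂ] H)) * Res₁ w) (Res₁ w₀ (u j)) := by rw [hcomm w hw]
        _ = (A₁ - I • (1 : H →L[ℂ] H)) (Res₁ w (Res₁ w₀ (u j))) := rfl
    have hdiff : uz w j - uz w₀ j
        = (w - w₀) • (A₁ - I • (1 : H →L[ℂ] H)) (Res₁ w (Res₁ w₀ (u j))) := by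
      rw [huz, huz, ← map_sub]
      have h1 : Res₁ w (u j) - Res₁ w₀ (u j)
          = ((w - w₀) • (Res₁ w * Res₁ w₀)) (u j) := by
        rw [← ContinuousLinearMap.sub_apply, hres w w₀ hw hw₀]
      rw [h1, ContinuousLinearMap.smul_apply, map_smul, ContinuousLinearMap.mul_apply]
    rw [hswap, ← hdiff]
    abel
  have hsolve : ∀ w w₀ : ℂ, w.im ≠ 0 → w₀.im ≠ 0 → w ≠ w₀ → ∀ j,
      Res₁ w (uz w₀ j) = (w - w₀)⁻¹ • (uz w j - uz w₀ j) := by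
    intro w w₀ hw hw₀ hne' j
    have h := hvec w w₀ hw hw₀ j
    have hsub : (w - w₀) • Res₁ w (uz w₀ j) = uz w j - uz w₀ j := by rw [h]; abel
    rw [← hsub, smul_smul, inv_mul_cancel₀ (sub_ne_zero.mpr hne'), one_smul]
  -- adjoint of resolvent
  have hadj : ∀ w : ℂ, ContinuousLinearMap.adjoint (Res₁ w) = Res₁ (conj w) := by
    intro w
    rw [hRes₁, hRes₁]
    exact adjoint_ringInverse' A₁ hA₁ w
  -- linear independence of the uz families
  have hli : ∀ w : ℂ, w.im ≠ 0 → LinearIndependent ℂ (uz w) := by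
    intro w hw
    set T : H →L[ℂ] H := (A₁ - I • (1 : H →L[ℂ] H)) * Res₁ w with hT
    have hUT : IsUnit T := by
      rw [hT, hRes₁]
      exact hUi.mul (hU1 w hw).ringInverse
    have hinj : Function.Injective T := by
      intro x y hxy
      have h1 : Ring.inverse T * T = 1 := Ring.inverse_mul_cancel _ hUT
      have h2 := congrArg (fun v => Ring.inverse T v) hxy
      simpa only [← ContinuousLinearMap.mul_apply, h1, ContinuousLinearMap.one_apply] using h2
    have heq : uz w = ⇑T ∘ u := by
      funext j
      rw [huz]
      rfl
    rw [heq]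
    exact hu.map' (T : H →ₗ[ℂ] H) (LinearMap.ker_eq_bot.mpr hinj)
  -- Gram matrix
  set G : Matrix (Fin n) (Fin n) ℂ :=
    Matrix.of (fun k' j => (inner ℂ (uz (conj z) k') (uz z₀ j) : ℂ)) with hG
  -- operator identity
  have hE_op : (Res₂ z - Res₁ z) - (Res₂ z₀ - Res₁ z₀)
      = (z - z₀) • (Res₂ z * (Res₂ z₀ - Res₁ z₀))
        + (z - z₀) • ((Res₂ z - Res₁ z) * Res₁ z₀) := by
    have h1 := hres z z₀ hz hz₀
    have h2 := hres2 z z₀ hz hz₀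
    calc (Res₂ z - Res₁ z) - (Res₂ z₀ - Res₁ z₀)
        = (Res₂ z - Res₂ z₀) - (Res₁ z - Res₁ z₀) := by abel
      _ = (z - z₀) • (Res₂ z * Res₂ z₀) - (z - z₀) • (Res₁ z * Res₁ z₀) := by rw [h1, h2]
      _ = (z - z₀) • (Res₂ z * (Res₂ z₀ - Res₁ z₀))
          + (z - z₀) • ((Res₂ z - Res₁ z) * Res₁ z₀) := by
        rw [mul_sub, sub_mul, smul_sub, smul_sub]
        abel
  -- pointwise Krein formulas
  have hKz : ∀ x : H, (Res₂ z - Res₁ z) x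
      = ∑ j, ∑ j', P z j j' • ((inner ℂ (uz (conj z) j') x : ℂ) • uz z j) := by
    intro x
    rw [hKrein z hz]
    simp [ContinuousLinearMap.sum_apply, ContinuousLinearMap.smul_apply,
      ContinuousLinearMap.smulRight_apply, innerSL_apply_apply]
  have hKz₀ : ∀ x : H, (Res₂ z₀ - Res₁ z₀) x
      = ∑ j, ∑ j', P z₀ j j' • ((inner ℂ (uz (conj z₀) j') x : ℂ) • uz z₀ j) := by
    intro x
    rw [hKrein z₀ hz₀]
    simp [ContinuousLinearMap.sum_apply, ContinuousLinearMap.smul_apply,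
      ContinuousLinearMap.smulRight_apply, innerSL_apply_apply]
  -- action of Res₂ z on uz z₀ j
  have hR2b : ∀ j, Res₂ z (uz z₀ j)
      = (z - z₀)⁻¹ • (uz z j - uz z₀ j) + ∑ k, ∑ k', P z k k' • (G k' j • uz z k) := by
    intro j
    have h1 : Res₂ z (uz z₀ j) = Res₁ z (uz z₀ j) + (Res₂ z - Res₁ z) (uz z₀ j) := by
      rw [ContinuousLinearMap.sub_apply]
      abel
    rw [h1, hsolve z z₀ hz hz₀ hne j, hKz (uz z₀ j)]
    rfl
  -- inner products against Res₁ z₀ x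
  have hinner : ∀ (j' : Fin n) (x : H), (inner ℂ (uz (conj z) j') (Res₁ z₀ x) : ℂ)
      = (z₀ - z)⁻¹ * ((inner ℂ (uz (conj z₀) j') x : ℂ) - (inner ℂ (uz (conj z) j') x : ℂ)) := by
    intro j' x
    rw [← ContinuousLinearMap.adjoint_inner_left, hadj z₀,
      hsolve (conj z₀) (conj z) hcz₀ hcz hcne j', inner_smul_left, inner_sub_left]
    congr 1
    rw [map_inv₀, map_sub]
    simp
  -- the pointwise identity feeding big_identity'
  have hEx : ∀ x : H,
      (∑ j, ∑ j', P z j j' • ((inner ℂ (uz (conj z) j') x : ℂ) • uz z j))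
        - (∑ j, ∑ j', P z₀ j j' • ((inner ℂ (uz (conj z₀) j') x : ℂ) • uz z₀ j))
      = (z - z₀) • (∑ j, ∑ j', P z₀ j j' • ((inner ℂ (uz (conj z₀) j') x : ℂ) •
            ((z - z₀)⁻¹ • (uz z j - uz z₀ j) + ∑ k, ∑ k', P z k k' • (G k' j • uz z k))))
        + (z - z₀) • (∑ j, ∑ j', P z j j' •
            (((z₀ - z)⁻¹ * ((inner ℂ (uz (conj z₀) j') x : ℂ)
              - (inner ℂ (uz (conj z) j') x : ℂ))) • uz z j)) := by
    intro x
    have h0 := congrArg (fun T : H →L[ℂ] H => T x) hE_op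
    simp only [ContinuousLinearMap.add_apply, ContinuousLinearMap.sub_apply,
      ContinuousLinearMap.smul_apply, ContinuousLinearMap.mul_apply] at h0
    have l1 : (Res₂ z) x - (Res₁ z) x - ((Res₂ z₀) x - (Res₁ z₀) x)
        = (∑ j, ∑ j', P z j j' • ((inner ℂ (uz (conj z) j') x : ℂ) • uz z j))
          - (∑ j, ∑ j', P z₀ j j' • ((inner ℂ (uz (conj z₀) j') x : ℂ) • uz z₀ j)) := by
      rw [← ContinuousLinearMap.sub_apply (Res₂ z) (Res₁ z),
        ← ContinuousLinearMap.sub_apply (Res₂ z₀) (Res₁ z₀), hKz x, hKz₀ x]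
    have r1 : Res₂ z ((Res₂ z₀) x - (Res₁ z₀) x)
        = ∑ j, ∑ j', P z₀ j j' • ((inner ℂ (uz (conj z₀) j') x : ℂ) •
            ((z - z₀)⁻¹ • (uz z j - uz z₀ j) + ∑ k, ∑ k', P z k k' • (G k' j • uz z k))) := by
      rw [← ContinuousLinearMap.sub_apply (Res₂ z₀) (Res₁ z₀), hKz₀ x, map_sum]
      refine Finset.sum_congr rfl fun j _ => ?_
      rw [map_sum]
      refine Finset.sum_congr rfl fun j' _ => ?_
      rw [map_smul, map_smul, hR2b j]
    have r2 : (Res₂ z) ((Res₁ z₀) x) - (Res₁ z) ((Res₁ z₀) x)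
        = ∑ j, ∑ j', P z j j' •
            (((z₀ - z)⁻¹ * ((inner ℂ (uz (conj z₀) j') x : ℂ)
              - (inner ℂ (uz (conj z) j') x : ℂ))) • uz z j) := by
      rw [← ContinuousLinearMap.sub_apply (Res₂ z) (Res₁ z), hKz (Res₁ z₀ x)]
      refine Finset.sum_congr rfl fun j _ => ?_
      refine Finset.sum_congr rfl fun j' _ => ?_
      rw [hinner j' x]
    rw [l1, r1, r2] at h0
    exact h0
  -- extract the matrix identity
  have hM : Matrix.of (fun k j' =>
      P z k j' - P z₀ k j' - (z - z₀) * (P z * G * P z₀) k j') = 0 := by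
    apply matrix_zero_of_sums' (uz z) (uz (conj z₀)) (hli z hz) (hli (conj z₀) hcz₀)
    intro x
    exact big_identity' (P z) (P z₀) G (uz z) (uz z₀)
      (fun j' => (inner ℂ (uz (conj z) j') x : ℂ))
      (fun j' => (inner ℂ (uz (conj z₀) j') x : ℂ)) hzz (hEx x)
  have hmat : P z - P z₀ = (z - z₀) • (P z * G * P z₀) := by
    ext k j'
    have h := congrFun (congrFun hM k) j'
    simp only [Matrix.of_apply, Matrix.zero_apply] at h
    simp only [Matrix.sub_apply, Matrix.smul_apply, smul_eq_mul]
    linear_combination h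
  -- final matrix algebra
  have hinvz : (P z)⁻¹ * P z = 1 := Matrix.nonsing_inv_mul (P z) hPz
  have hinvz₀' : P z₀ * (P z₀)⁻¹ = 1 := Matrix.mul_nonsing_inv (P z₀) hPz₀
  have key : (P z)⁻¹ * (P z - P z₀) * (P z₀)⁻¹ = (P z₀)⁻¹ - (P z)⁻¹ := by
    rw [mul_sub, sub_mul, hinvz, one_mul, mul_assoc, hinvz₀', mul_one]
  have key2 : (P z)⁻¹ * ((z - z₀) • (P z * G * P z₀)) * (P z₀)⁻¹ = (z - z₀) • G := by
    rw [mul_smul_comm, smul_mul_assoc]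
    congr 1
    calc (P z)⁻¹ * (P z * G * P z₀) * (P z₀)⁻¹
        = (P z)⁻¹ * P z * G * (P z₀ * (P z₀)⁻¹) := by noncomm_ring
      _ = G := by rw [hinvz, hinvz₀', one_mul, mul_one]
  have final : (P z₀)⁻¹ - (P z)⁻¹ = (z - z₀) • G := by
    rw [← key, hmat, key2]
  ext j j'
  have h := congrFun (congrFun final j) j'
  simp only [Matrix.sub_apply, Matrix.smul_apply, smul_eq_mul] at h
  simp only [Matrix.sub_apply, Matrix.of_apply]
  have hGjj : G j j' = (inner ℂ (uz (conj z) j) (uz z₀ j') : ℂ) := rfl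
  rw [hGjj] at h
  linear_combination -h
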